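/- arXiv:2301.11137 — 2 statements merged into one kernel-verified Lean document; each statement's English description precedes it below -/
import Mathlib

section
/- Let q, x, y be complex numbers with |q| < 1 such that x²y q^{2n+2} ≠ 1 for every integer n ≥ 0 and x ≠ 1. Then (−x;q)_∞ (xy;q)_∞ / (x²yq²;q²)_∞ = Σ_{n ≥ 0} xⁿ q^{C(n,2)} (1 − x²y² q^{4n}) (xy;q)_n (y;q²)_n / ((q;q)_n (x²yq²;q²)_n). -/
/-- The finite q-Pochhammer symbol `(a; q)_n = ∏_{k=0}^{n-1} (1 - a q^k)`. -/
noncomputable def qPoch (a q : ℂ) (n : ℕ) : ℂ :=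
  ∏ k ∈ Finset.range n, (1 - a * q ^ k)

/-- The infinite q-Pochhammer symbol `(a; q)_∞ = ∏_{k=0}^{∞} (1 - a q^k)`. -/
noncomputable def qPochInf (a q : ℂ) : ℂ :=
  ∏' k : ℕ, (1 - a * q ^ k)

/-
Write `F(x)` for the series. A telescoping certificate gives the q-difference equation
`(1 - x²yq²) F(x) = (1 + x)(1 - xy) F(xq)`, so `G(x) = (x²yq²;q²)_∞ F(x)` satisfies
`G(x) = (1 + x)(1 - xy) G(xq)`, as does the product `(-x;q)_∞ (xy;q)_∞`. Iterating `m` times,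
the difference of the two sides at `x` is `(-x;q)_m (xy;q)_m` times their difference at `xq^m`.
The prefactor stays bounded while both sides tend to `1` as `xq^m → 0`, so they agree.
-/

open Filter Topology

section QPochhammer

variable {a q : ℂ}

lemma qPoch_succ (a q : ℂ) (n : ℕ) : qPoch a q (n + 1) = qPoch a q n * (1 - a * q ^ n) :=
  Finset.prod_range_succ _ _

lemma qPoch_succ' (a q : ℂ) (n : ℕ) : qPoch a q (n + 1) = (1 - a) * qPoch (a * q) q n := by
  simp only [qPoch, Finset.prod_range_succ', pow_succ', pow_zero, mul_one, mul_assoc, mul_comm]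

lemma qPoch_add (a q : ℂ) (m n : ℕ) : qPoch a q (m + n) = qPoch a q m * qPoch (a * q ^ m) q n := by
  simp only [qPoch, Finset.prod_range_add, pow_add, mul_assoc]

lemma qPoch_ne_zero (ha : ∀ k : ℕ, 1 - a * q ^ k ≠ 0) (n : ℕ) : qPoch a q n ≠ 0 :=
  Finset.prod_ne_zero_iff.2 fun k _ => ha k

lemma norm_sq_lt_one (hq : ‖q‖ < 1) : ‖q ^ 2‖ < 1 := by
  simpa [norm_pow] using pow_lt_one₀ (norm_nonneg q) hq two_ne_zero

lemma one_sub_mul_pow_ne_zero (ha : ‖a‖ < 1) (hq : ‖q‖ ≤ 1) (k : ℕ) : 1 - a * q ^ k ≠ 0 := by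
  refine sub_ne_zero.2 fun h => ?_
  have : ‖a * q ^ k‖ < 1 := by
    rw [norm_mul, norm_pow]
    exact mul_lt_one_of_nonneg_of_lt_one_left (norm_nonneg a) ha (pow_le_one₀ (norm_nonneg q) hq)
  simp [← h] at this

lemma qPoch_self_ne_zero (hq : ‖q‖ < 1) (n : ℕ) : qPoch q q n ≠ 0 :=
  qPoch_ne_zero (one_sub_mul_pow_ne_zero hq hq.le) n

lemma summable_norm_mul_pow (a : ℂ) (hq : ‖q‖ < 1) : Summable fun k : ℕ => ‖a * q ^ k‖ := by
  simpa [norm_mul, norm_pow] using (summable_geometric_of_lt_one (norm_nonneg q) hq).mul_left ‖a‖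

lemma multipliable_one_sub_mul_pow (a : ℂ) (hq : ‖q‖ < 1) :
    Multipliable fun k : ℕ => 1 - a * q ^ k := by
  simpa [sub_eq_add_neg] using multipliable_one_add_of_summable (f := fun k => -(a * q ^ k))
    (by simpa using summable_norm_mul_pow a hq)

lemma qPochInf_ne_zero (hq : ‖q‖ < 1) (ha : ∀ k : ℕ, 1 - a * q ^ k ≠ 0) : qPochInf a q ≠ 0 := by
  simpa [qPochInf, sub_eq_add_neg] using
    tprod_one_add_ne_zero_of_summable (f := fun k => -(a * q ^ k))
      (by simpa [sub_eq_add_neg] using ha) (by simpa using summable_norm_mul_pow a hq)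

lemma tendsto_qPoch (a : ℂ) (hq : ‖q‖ < 1) : Tendsto (qPoch a q) atTop (𝓝 (qPochInf a q)) :=
  (multipliable_one_sub_mul_pow a hq).tendsto_prod_tprod_nat

lemma qPochInf_eq_one_sub_mul (a : ℂ) (hq : ‖q‖ < 1) :
    qPochInf a q = (1 - a) * qPochInf (a * q) q := by
  rw [qPochInf, tprod_eq_zero_mul' ?_]
  · simp [qPochInf, pow_succ', mul_assoc]
  · simpa [pow_succ', mul_assoc] using multipliable_one_sub_mul_pow (a * q) hq

lemma tendsto_qPochInf_mul_pow (a : ℂ) (hq : ‖q‖ < 1) :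
    Tendsto (fun m : ℕ => qPochInf (a * q ^ m) q) atTop (𝓝 1) := by
  have h := tendsto_tprod_one_add_of_dominated_convergence (𝓕 := atTop) (g := fun _ => (0 : ℂ))
    (f := fun (m k : ℕ) => -(a * q ^ m * q ^ k)) (summable_norm_mul_pow a hq) (fun k => ?_)
    (Eventually.of_forall fun m k => ?_)
  · simpa [qPochInf, sub_eq_add_neg] using h
  · simpa using
      (((tendsto_pow_atTop_nhds_zero_of_norm_lt_one hq).const_mul a).mul_const (q ^ k)).neg
  · rw [norm_neg, norm_mul, norm_mul, norm_mul, norm_pow, norm_pow]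
    exact mul_le_mul_of_nonneg_right
      (mul_le_of_le_one_right (norm_nonneg a) (pow_le_one₀ (norm_nonneg q) hq.le)) (by positivity)

lemma norm_qPoch_le (a : ℂ) (hq : ‖q‖ < 1) (n : ℕ) :
    ‖qPoch a q n‖ ≤ Real.exp (‖a‖ / (1 - ‖q‖)) := by
  have h := (Finset.range n).norm_prod_one_add_sub_one_le fun k => -(a * q ^ k)
  simp only [← sub_eq_add_neg, norm_neg] at h
  calc ‖qPoch a q n‖ ≤ Real.exp (∑ k ∈ Finset.range n, ‖a * q ^ k‖) := by
        have := norm_le_norm_sub_add (qPoch a q n) 1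
        rw [norm_one] at this
        simp only [qPoch] at this ⊢
        linarith
    _ ≤ Real.exp (‖a‖ / (1 - ‖q‖)) := by
        gcongr
        simpa [norm_mul, norm_pow, ← Finset.mul_sum, div_eq_mul_inv, tsum_mul_left,
          tsum_geometric_of_lt_one (norm_nonneg q) hq] using
          (summable_norm_mul_pow a hq).sum_le_tsum (Finset.range n) fun k _ => norm_nonneg _

/-- `(a q^m; q)_n⁻¹ = (a;q)_m (a;q)_{m+n}⁻¹`, and `(a;q)_{m+n}` converges to `(a;q)_∞ ≠ 0`. -/
lemma exists_norm_inv_qPoch_mul_pow_le (hq : ‖q‖ < 1) (ha : ∀ k : ℕ, 1 - a * q ^ k ≠ 0) :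
    ∃ C, ∀ m n : ℕ, ‖(qPoch (a * q ^ m) q n)⁻¹‖ ≤ C := by
  obtain ⟨C, hC⟩ := isBounded_iff_forall_norm_le.1 <| Metric.isBounded_range_of_tendsto _ <|
    (tendsto_qPoch a hq).inv₀ (qPochInf_ne_zero hq ha)
  refine ⟨Real.exp (‖a‖ / (1 - ‖q‖)) * C, fun m n => ?_⟩
  rw [show (qPoch (a * q ^ m) q n)⁻¹ = qPoch a q m * (qPoch a q (m + n))⁻¹ by
    rw [qPoch_add, mul_inv, ← mul_assoc, mul_inv_cancel₀ (qPoch_ne_zero ha m), one_mul], norm_mul]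
  exact mul_le_mul (norm_qPoch_le a hq m) (hC _ ⟨m + n, rfl⟩) (norm_nonneg _) (Real.exp_pos _).le

end QPochhammer

lemma summable_pow_mul_pow_choose_two {r ρ : ℝ} (hr : 0 ≤ r) (hρ₀ : 0 ≤ ρ) (hρ : ρ < 1) :
    Summable fun n : ℕ => r ^ n * ρ ^ n.choose 2 := by
  refine summable_of_ratio_norm_eventually_le (r := 1 / 2) (by norm_num) ?_
  have h : Tendsto (fun n : ℕ => r * ρ ^ n) atTop (𝓝 0) := by
    simpa using (tendsto_pow_atTop_nhds_zero_of_lt_one hρ₀ hρ).const_mul r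
  filter_upwards [h.eventually (eventually_le_nhds (by norm_num : (0 : ℝ) < 1 / 2))] with n hn
  rw [Nat.choose_succ_succ', Nat.choose_one_right, pow_succ, pow_add, Real.norm_eq_abs,
    Real.norm_eq_abs, abs_of_nonneg (by positivity), abs_of_nonneg (by positivity)]
  nlinarith [show 0 ≤ r ^ n * ρ ^ n.choose 2 by positivity]

lemma summable_mul_of_tendsto {R : Type*} [NormedRing R] [CompleteSpace R] {f g : ℕ → R} {l : R}
    (hf : Tendsto f atTop (𝓝 l)) (hg : Summable fun n => ‖g n‖) : Summable fun n => f n * g n := by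
  obtain ⟨C, hC⟩ := isBounded_iff_forall_norm_le.1 (Metric.isBounded_range_of_tendsto f hf)
  exact (hg.mul_left C).of_norm_bounded fun n =>
    (norm_mul_le _ _).trans (mul_le_mul_of_nonneg_right (hC _ ⟨n, rfl⟩) (norm_nonneg _))

lemma tsum_sub_succ {G : Type*} [AddCommGroup G] [TopologicalSpace G] [IsTopologicalAddGroup G]
    [T2Space G] {f : ℕ → G} (hf : Summable f) : ∑' n, (f n - f (n + 1)) = f 0 := by
  rw [hf.tsum_sub ((summable_nat_add_iff 1).2 hf), hf.tsum_eq_zero_add, add_sub_cancel_right]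

lemma eq_of_tendsto_sub_of_recurrence {R : Type*} [NormedCommRing R] {u v c : ℕ → R} {C : ℝ}
    (hu : ∀ m, u m = c m * u (m + 1)) (hv : ∀ m, v m = c m * v (m + 1))
    (hc : ∀ m, ‖∏ j ∈ Finset.range m, c j‖ ≤ C) (huv : Tendsto (fun m => u m - v m) atTop (𝓝 0)) :
    u 0 = v 0 := by
  have hiter : ∀ m, u 0 - v 0 = (∏ j ∈ Finset.range m, c j) * (u m - v m) := by
    intro m
    induction m with
    | zero => simp
    | succ m ih => rw [ih, Finset.prod_range_succ, hu m, hv m]; ring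
  have hlim : Tendsto (fun m => C * ‖u m - v m‖) atTop (𝓝 0) := by
    simpa using huv.norm.const_mul C
  refine sub_eq_zero.1 (norm_le_zero_iff.1 (ge_of_tendsto' hlim fun m => ?_))
  rw [hiter m]
  exact (norm_mul_le _ _).trans (mul_le_mul_of_nonneg_right (hc m) (norm_nonneg _))

namespace Trivariate

noncomputable def term (q y x : ℂ) (n : ℕ) : ℂ :=
  x ^ n * q ^ Nat.choose n 2 * (1 - x ^ 2 * y ^ 2 * q ^ (4 * n)) *
    qPoch (x * y) q n * qPoch y (q ^ 2) n /
    (qPoch q q n * qPoch (x ^ 2 * y * q ^ 2) (q ^ 2) n)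

/-- `term` and `cert` are both `base` times a polynomial in `q ^ n`. -/
noncomputable def base (q y x : ℂ) (n : ℕ) : ℂ :=
  x ^ n * q ^ Nat.choose n 2 * qPoch (x * y) q n * qPoch y (q ^ 2) n /
    (qPoch q q n * qPoch (x ^ 2 * y * q ^ 2) (q ^ 2) (n + 1))

/-- The factor `1 - t` makes `cert q y x 0 = 0`, so the telescoped sum vanishes. -/
def certFactor (q y x t : ℂ) : ℂ :=
  (1 - t) * (1 - x ^ 2 * y * q ^ 2) *
    (1 + x * y * (1 - x * q ^ 2) * t ^ 2 - x ^ 3 * y ^ 2 * q ^ 2 * t ^ 4)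

noncomputable def cert (q y x : ℂ) (n : ℕ) : ℂ := certFactor q y x (q ^ n) * base q y x n

noncomputable def series (q y x : ℂ) : ℂ := ∑' n, term q y x n

noncomputable def product (q y x : ℂ) : ℂ := qPochInf (-x) q * qPochInf (x * y) q

variable {q y x : ℂ}

lemma product_eq_mul (hq : ‖q‖ < 1) (x : ℂ) :
    product q y x = (1 + x) * (1 - x * y) * product q y (x * q) := by
  rw [product, product, qPochInf_eq_one_sub_mul (-x) hq, qPochInf_eq_one_sub_mul (x * y) hq]
  ring_nf

lemma tendsto_product_mul_pow (hq : ‖q‖ < 1) :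
    Tendsto (fun m : ℕ => product q y (x * q ^ m)) atTop (𝓝 1) := by
  simpa [product, neg_mul, mul_right_comm x y] using
    (tendsto_qPochInf_mul_pow (-x) hq).mul (tendsto_qPochInf_mul_pow (x * y) hq)

lemma factor_ne_zero_mul_pow (hd : ∀ k : ℕ, 1 - x ^ 2 * y * q ^ 2 * (q ^ 2) ^ k ≠ 0) (m k : ℕ) :
    1 - (x * q ^ m) ^ 2 * y * q ^ 2 * (q ^ 2) ^ k ≠ 0 := by
  convert hd (m + k) using 2
  ring

lemma continuousAt_term (q y : ℂ) (hq : ‖q‖ < 1) (n : ℕ) :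
    ContinuousAt (fun x => term q y x n) 0 := by
  refine ContinuousAt.div (by unfold qPoch; fun_prop) (by unfold qPoch; fun_prop) ?_
  simpa [qPoch] using qPoch_self_ne_zero hq n

lemma series_zero (q y : ℂ) : series q y 0 = 1 := by
  rw [series, tsum_eq_single 0 fun n hn => by simp [term, hn]]
  simp [term, qPoch]

section
variable (hq : ‖q‖ < 1) (hd : ∀ k : ℕ, 1 - x ^ 2 * y * q ^ 2 * (q ^ 2) ^ k ≠ 0)
include hq hd

lemma term_eq_mul_base (n : ℕ) :
    term q y x n = (1 - x ^ 2 * y ^ 2 * q ^ (4 * n)) * (1 - x ^ 2 * y * q ^ 2 * (q ^ 2) ^ n) *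
      base q y x n := by
  have hQ := qPoch_self_ne_zero hq n
  rw [term, base, mul_div_assoc', div_eq_div_iff (mul_ne_zero hQ (qPoch_ne_zero hd n))
    (mul_ne_zero hQ (qPoch_ne_zero hd (n + 1))), qPoch_succ]
  ring

lemma one_sub_mul_mul_term_mul_eq (n : ℕ) :
    (1 - x * y) * term q y (x * q) n = q ^ n * (1 - x ^ 2 * y ^ 2 * q ^ 2 * q ^ (4 * n)) *
      (1 - x * y * q ^ n) * (1 - x ^ 2 * y * q ^ 2) * base q y x n := by
  have hQ := qPoch_self_ne_zero hq n
  have hQ' := qPoch_ne_zero hd (n + 1)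
  have hd' := factor_ne_zero_mul_pow hd 1
  simp only [pow_one] at hd'
  have h : (1 - x * y) * qPoch (x * y * q) q n = qPoch (x * y) q n * (1 - x * y * q ^ n) := by
    rw [← qPoch_succ', qPoch_succ]
  rw [term, base, mul_div_assoc', mul_div_assoc', div_eq_div_iff
    (mul_ne_zero hQ (qPoch_ne_zero hd' n)) (mul_ne_zero hQ hQ'), qPoch_succ' (x ^ 2 * y * q ^ 2),
    show x * q * y = x * y * q by ring,
    show (x * q) ^ 2 * y * q ^ 2 = x ^ 2 * y * q ^ 2 * q ^ 2 by ring]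
  linear_combination (x * q) ^ n * q ^ n.choose 2 * (1 - (x * q) ^ 2 * y ^ 2 * q ^ (4 * n)) *
    qPoch y (q ^ 2) n * qPoch q q n * (1 - x ^ 2 * y * q ^ 2) *
    qPoch (x ^ 2 * y * q ^ 2 * q ^ 2) (q ^ 2) n * h

lemma base_succ (n : ℕ) :
    (1 - q ^ (n + 1)) * (1 - x ^ 2 * y * q ^ 2 * (q ^ 2) ^ (n + 1)) * base q y x (n + 1) =
      x * q ^ n * (1 - x * y * q ^ n) * (1 - y * (q ^ 2) ^ n) * base q y x n := by
  have hQ := qPoch_self_ne_zero hq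
  rw [base, base, mul_div_assoc', mul_div_assoc', div_eq_div_iff
    (mul_ne_zero (hQ _) (qPoch_ne_zero hd _)) (mul_ne_zero (hQ _) (qPoch_ne_zero hd _)),
    qPoch_succ (x * y), qPoch_succ y, qPoch_succ q, qPoch_succ _ _ (n + 1),
    Nat.choose_succ_succ', Nat.choose_one_right]
  ring

lemma term_sub_term_eq_cert_sub_cert (n : ℕ) :
    (1 - x ^ 2 * y * q ^ 2) * term q y x n - (1 + x) * (1 - x * y) * term q y (x * q) n =
      cert q y x n - cert q y x (n + 1) := by
  -- multiplied by `1 - x²yq^{2n+4}`, every term becomes `base q y x n` times a polynomial in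
  -- `x, y, q, q ^ n`, and what is left is a polynomial identity
  refine mul_left_cancel₀ (hd (n + 1)) ?_
  rw [cert, cert, certFactor, certFactor]
  linear_combination (1 - x ^ 2 * y * q ^ 2 * (q ^ 2) ^ (n + 1)) * (1 - x ^ 2 * y * q ^ 2) *
      term_eq_mul_base hq hd n -
    (1 - x ^ 2 * y * q ^ 2 * (q ^ 2) ^ (n + 1)) * (1 + x) * one_sub_mul_mul_term_mul_eq hq hd n +
    (1 - x ^ 2 * y * q ^ 2) * (1 + x * y * (1 - x * q ^ 2) * (q ^ (n + 1)) ^ 2 -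
      x ^ 3 * y ^ 2 * q ^ 2 * (q ^ (n + 1)) ^ 4) * base_succ hq hd n

lemma exists_norm_base_mul_pow_le :
    ∃ K, ∀ m n : ℕ, ‖base q y (x * q ^ m) n‖ ≤ K * (‖x‖ ^ n * ‖q‖ ^ n.choose 2) := by
  have hq₂ := norm_sq_lt_one hq
  obtain ⟨C₁, hC₁⟩ :=
    exists_norm_inv_qPoch_mul_pow_le hq (one_sub_mul_pow_ne_zero hq hq.le)
  obtain ⟨C₂, hC₂⟩ := exists_norm_inv_qPoch_mul_pow_le hq₂ hd
  have hC₁₀ : 0 ≤ C₁ := (norm_nonneg _).trans (hC₁ 0 0)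
  refine ⟨Real.exp (‖x‖ * ‖y‖ / (1 - ‖q‖)) * Real.exp (‖y‖ / (1 - ‖q ^ 2‖)) * (C₁ * C₂),
    fun m n => ?_⟩
  have hxm : ‖x * q ^ m‖ ≤ ‖x‖ := by
    rw [norm_mul, norm_pow]
    exact mul_le_of_le_one_right (norm_nonneg x) (pow_le_one₀ (norm_nonneg q) hq.le)
  have e₁ : ‖qPoch (x * q ^ m * y) q n‖ ≤ Real.exp (‖x‖ * ‖y‖ / (1 - ‖q‖)) := by
    refine (norm_qPoch_le _ hq n).trans ?_
    have : 0 < 1 - ‖q‖ := by linarith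
    rw [norm_mul]
    gcongr
  have e₃ : ‖(qPoch q q n)⁻¹‖ ≤ C₁ := by simpa using hC₁ 0 n
  have e₄ : ‖(qPoch ((x * q ^ m) ^ 2 * y * q ^ 2) (q ^ 2) (n + 1))⁻¹‖ ≤ C₂ := by
    rw [show (x * q ^ m) ^ 2 * y * q ^ 2 = x ^ 2 * y * q ^ 2 * (q ^ 2) ^ m by ring]
    exact hC₂ m (n + 1)
  calc ‖base q y (x * q ^ m) n‖
      = ‖x * q ^ m‖ ^ n * ‖q‖ ^ n.choose 2 * ‖qPoch (x * q ^ m * y) q n‖ *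
          ‖qPoch y (q ^ 2) n‖ * (‖(qPoch q q n)⁻¹‖ *
          ‖(qPoch ((x * q ^ m) ^ 2 * y * q ^ 2) (q ^ 2) (n + 1))⁻¹‖) := by
        rw [base, div_eq_mul_inv, mul_inv]
        simp only [norm_mul, norm_pow]
    _ ≤ ‖x‖ ^ n * ‖q‖ ^ n.choose 2 * Real.exp (‖x‖ * ‖y‖ / (1 - ‖q‖)) *
          Real.exp (‖y‖ / (1 - ‖q ^ 2‖)) * (C₁ * C₂) := by
        gcongr
        exact norm_qPoch_le y hq₂ n
    _ = _ := by ring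

lemma exists_norm_term_mul_pow_le :
    ∃ K, ∀ m n : ℕ, ‖term q y (x * q ^ m) n‖ ≤ K * (‖x‖ ^ n * ‖q‖ ^ n.choose 2) := by
  obtain ⟨K, hK⟩ := exists_norm_base_mul_pow_le hq hd
  refine ⟨(1 + ‖x ^ 2 * y ^ 2‖) * (1 + ‖x ^ 2 * y * q ^ 2‖) * K, fun m n => ?_⟩
  have hle (z : ℂ) (k : ℕ) : ‖1 - z * q ^ k‖ ≤ 1 + ‖z‖ := by
    refine (norm_sub_le _ _).trans ?_
    rw [norm_one, norm_mul, norm_pow]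
    gcongr
    exact mul_le_of_le_one_right (norm_nonneg z) (pow_le_one₀ (norm_nonneg q) hq.le)
  have hK₀ : 0 ≤ K := by simpa using (norm_nonneg _).trans (hK 0 0)
  rw [term_eq_mul_base hq (factor_ne_zero_mul_pow hd m),
    show (x * q ^ m) ^ 2 * y ^ 2 * q ^ (4 * n) = x ^ 2 * y ^ 2 * q ^ (2 * m + 4 * n) by ring,
    show (x * q ^ m) ^ 2 * y * q ^ 2 * (q ^ 2) ^ n = x ^ 2 * y * q ^ 2 * q ^ (2 * m + 2 * n) by
      ring,
    norm_mul, norm_mul, mul_assoc _ K]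
  gcongr
  · exact hle _ _
  · exact hle _ _
  · exact hK m n

lemma summable_term : Summable (term q y x) := by
  obtain ⟨K, hK⟩ := exists_norm_term_mul_pow_le hq hd
  refine ((summable_pow_mul_pow_choose_two (norm_nonneg x) (norm_nonneg q) hq).mul_left K)
    |>.of_norm_bounded fun n => ?_
  simpa using hK 0 n

lemma summable_cert : Summable (cert q y x) := by
  obtain ⟨K, hK⟩ := exists_norm_base_mul_pow_le hq hd
  refine summable_mul_of_tendsto
    (((by unfold certFactor; fun_prop : Continuous (certFactor q y x)).tendsto 0).comp
      (tendsto_pow_atTop_nhds_zero_of_norm_lt_one hq))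
    (((summable_pow_mul_pow_choose_two (norm_nonneg x) (norm_nonneg q) hq).mul_left K)
      |>.of_nonneg_of_le (fun n => norm_nonneg _) fun n => ?_)
  simpa using hK 0 n

lemma one_sub_mul_series_eq :
    (1 - x ^ 2 * y * q ^ 2) * series q y x = (1 + x) * (1 - x * y) * series q y (x * q) := by
  have hd' := factor_ne_zero_mul_pow hd 1
  simp only [pow_one] at hd'
  rw [← sub_eq_zero, series, series, ← tsum_mul_left, ← tsum_mul_left,
    ← ((summable_term hq hd).mul_left _).tsum_sub ((summable_term hq hd').mul_left _),
    tsum_congr (term_sub_term_eq_cert_sub_cert hq hd), tsum_sub_succ (summable_cert hq hd)]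
  simp [cert, certFactor]

lemma tendsto_series_mul_pow : Tendsto (fun m : ℕ => series q y (x * q ^ m)) atTop (𝓝 1) := by
  obtain ⟨K, hK⟩ := exists_norm_term_mul_pow_le hq hd
  rw [← series_zero q y]
  refine tendsto_tsum_of_dominated_convergence
    ((summable_pow_mul_pow_choose_two (norm_nonneg x) (norm_nonneg q) hq).mul_left K)
    (fun n => ?_) (Eventually.of_forall (hK ·))
  refine (continuousAt_term q y hq n).tendsto.comp ?_
  simpa using (tendsto_pow_atTop_nhds_zero_of_norm_lt_one hq).const_mul x

lemma qPochInf_mul_series_eq_mul :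
    qPochInf (x ^ 2 * y * q ^ 2) (q ^ 2) * series q y x = (1 + x) * (1 - x * y) *
      (qPochInf ((x * q) ^ 2 * y * q ^ 2) (q ^ 2) * series q y (x * q)) := by
  rw [qPochInf_eq_one_sub_mul _ (norm_sq_lt_one hq),
    show x ^ 2 * y * q ^ 2 * q ^ 2 = (x * q) ^ 2 * y * q ^ 2 by ring]
  linear_combination qPochInf ((x * q) ^ 2 * y * q ^ 2) (q ^ 2) * one_sub_mul_series_eq hq hd

lemma qPochInf_mul_series_eq :
    qPochInf (x ^ 2 * y * q ^ 2) (q ^ 2) * series q y x = product q y x := by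
  have hc (m : ℕ) : ‖∏ j ∈ Finset.range m, (1 + x * q ^ j) * (1 - x * q ^ j * y)‖ ≤
      Real.exp (‖-x‖ / (1 - ‖q‖)) * Real.exp (‖x * y‖ / (1 - ‖q‖)) := by
    rw [show ∏ j ∈ Finset.range m, (1 + x * q ^ j) * (1 - x * q ^ j * y) =
        qPoch (-x) q m * qPoch (x * y) q m by
      rw [qPoch, qPoch, ← Finset.prod_mul_distrib]
      exact Finset.prod_congr rfl fun j _ => by ring, norm_mul]
    exact mul_le_mul (norm_qPoch_le _ hq m) (norm_qPoch_le _ hq m) (norm_nonneg _)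
      (Real.exp_pos _).le
  have hlim : Tendsto (fun m : ℕ => qPochInf ((x * q ^ m) ^ 2 * y * q ^ 2) (q ^ 2)) atTop (𝓝 1) :=
    (tendsto_qPochInf_mul_pow (x ^ 2 * y * q ^ 2) (norm_sq_lt_one hq)).congr fun m => by ring_nf
  have key := eq_of_tendsto_sub_of_recurrence
    (u := fun m => qPochInf ((x * q ^ m) ^ 2 * y * q ^ 2) (q ^ 2) * series q y (x * q ^ m))
    (v := fun m => product q y (x * q ^ m))
    (fun m => by
      rw [pow_succ q m, ← mul_assoc x]
      exact qPochInf_mul_series_eq_mul hq (factor_ne_zero_mul_pow hd m))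
    (fun m => by rw [pow_succ q m, ← mul_assoc x]; exact product_eq_mul hq _) hc
    (by simpa using (hlim.mul (tendsto_series_mul_pow hq hd)).sub (tendsto_product_mul_pow hq))
  simpa using key
end

end Trivariate

theorem trivariate_single_sum_general (q x y : ℂ) (hq : ‖q‖ < 1)
    (hxy : ∀ n : ℕ, x ^ 2 * y * q ^ (2 * n + 2) ≠ 1) :
    qPochInf (-x) q * qPochInf (x * y) q / qPochInf (x ^ 2 * y * q ^ 2) (q ^ 2) =
      ∑' n : ℕ,
        x ^ n * q ^ Nat.choose n 2 * (1 - x ^ 2 * y ^ 2 * q ^ (4 * n)) *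
          qPoch (x * y) q n * qPoch y (q ^ 2) n /
          (qPoch q q n * qPoch (x ^ 2 * y * q ^ 2) (q ^ 2) n) := by
  have hd : ∀ k : ℕ, 1 - x ^ 2 * y * q ^ 2 * (q ^ 2) ^ k ≠ 0 := fun k => by
    rw [sub_ne_zero, ne_comm, show x ^ 2 * y * q ^ 2 * (q ^ 2) ^ k = x ^ 2 * y * q ^ (2 * k + 2) by
      ring]
    exact hxy k
  rw [div_eq_iff (qPochInf_ne_zero (norm_sq_lt_one hq) hd)]
  exact (Trivariate.qPochInf_mul_series_eq hq hd).symm.trans (mul_comm _ _)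

/-- **Theorem 2.1** (a trivariate identity):
`(−x;q)_∞ (xy;q)_∞ / (x²yq²;q²)_∞
  = Σ_{n≥0} xⁿ q^{C(n,2)} (1 − x²y²q^{4n}) (xy;q)_n (y;q²)_n / ((q;q)_n (x²yq²;q²)_n)`. -/
theorem trivariate_single_sum (q x y : ℂ) (hq : ‖q‖ < 1)
    (hxy : ∀ n : ℕ, x ^ 2 * y * q ^ (2 * n + 2) ≠ 1) (hx : x ≠ 1) :
    qPochInf (-x) q * qPochInf (x * y) q / qPochInf (x ^ 2 * y * q ^ 2) (q ^ 2) =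
      ∑' n : ℕ,
        x ^ n * q ^ Nat.choose n 2 * (1 - x ^ 2 * y ^ 2 * q ^ (4 * n)) *
          qPoch (x * y) q n * qPoch y (q ^ 2) n /
          (qPoch q q n * qPoch (x ^ 2 * y * q ^ 2) (q ^ 2) n) :=
  trivariate_single_sum_general q x y hq hxy
end

section
/- Let q, x be complex numbers with |q| < 1 and |x| ≤ 1. For nonnegative integers n, m, let B₂(n,m) be the number of multisets of odd positive integers in which every value has multiplicity at most 3, with exactly m elements counted with multiplicity and total sum n. Then Σ_{m,n ≥ 0} B₂(n,m) x^m q^n = (−xq;q²)_∞ (−x²q²;q⁴)_∞, where the double series converges absolutely. -/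
/-- `B₂(n,m)`: number of multisets of odd positive integers in which every value has
multiplicity at most 3, with `m` elements counted with multiplicity and total sum `n`. -/
noncomputable def B2count (n m : ℕ) : ℕ :=
  Set.ncard {M : Multiset ℕ | (∀ p ∈ M, Odd p ∧ 0 < p) ∧ (∀ p, M.count p ≤ 3) ∧
    Multiset.card M = m ∧ M.sum = n}

open Finset Filter

theorem Finset.mem_finsupp_range_succ_iff {ι : Type*} {s : Finset ι} {N : ℕ} {h : ι →₀ ℕ} :
    h ∈ s.finsupp (fun _ => range (N + 1)) ↔ h.support ⊆ s ∧ ∀ i, h i ≤ N := by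
  rw [mem_finsupp_iff]
  refine and_congr_right fun hs => ⟨fun hN i => ?_, fun hN i _ => mem_range_succ_iff.mpr (hN i)⟩
  by_cases hi : i ∈ s
  · exact mem_range_succ_iff.mp (hN i hi)
  · simp [Finsupp.notMem_support_iff.mp (mt (@hs i) hi)]

theorem Finset.sum_finsupp_prod_pow {ι R : Type*} [CommSemiring R] (z : ι → R) (s : Finset ι)
    (t : Finset ℕ) :
    ∑ h ∈ s.finsupp (fun _ => t), h.prod (fun i e => z i ^ e) = ∏ i ∈ s, ∑ e ∈ t, z i ^ e := by
  classical
  rw [Finset.finsupp, sum_map, prod_sum]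
  refine sum_congr rfl fun p _ => ?_
  rw [Function.Embedding.coeFn_mk, Finsupp.prod_of_support_subset _
    (Finsupp.support_indicator_subset s p) _ fun _ _ => pow_zero _, ← prod_attach s]
  exact prod_congr rfl fun i _ => by rw [Finsupp.indicator_of_mem i.2]

theorem sum_range_pow_le_one_add_pow {t : ℝ} (ht : 0 ≤ t) (N : ℕ) :
    ∑ e ∈ range (N + 1), t ^ e ≤ (1 + t) ^ N := by
  induction N with
  | zero => simp
  | succ N ih =>
    calc ∑ e ∈ range (N + 2), t ^ e = t * ∑ e ∈ range (N + 1), t ^ e + 1 := geom_sum_succ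
      _ ≤ t * (1 + t) ^ N + (1 + t) ^ N := by
        gcongr
        exact one_le_pow₀ (by linarith)
      _ = (1 + t) ^ (N + 1) := by ring

section BoundedMultiplicities

variable {ι R : Type*} [NormedCommRing R] [NormOneClass R] [CompleteSpace R] {z : ι → R}

theorem summable_finsupp_prod_pow (hz : Summable (‖z ·‖)) (N : ℕ) :
    Summable fun h : {h : ι →₀ ℕ // ∀ i, h i ≤ N} => h.1.prod fun i e => z i ^ e := by
  classical
  refine Summable.of_norm_bounded (g := fun h => h.1.prod fun i e => ‖z i‖ ^ e) ?_ fun h =>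
    (Finset.norm_prod_le _ _).trans <| prod_le_prod (fun _ _ => norm_nonneg _) fun _ _ =>
      norm_pow_le _ _
  refine summable_of_sum_le (c := Real.exp (∑' i, ‖z i‖) ^ N)
    (fun h => prod_nonneg fun i _ => by positivity) fun u => ?_
  set S := u.sup fun h => h.1.support
  have hu : u.map (Function.Embedding.subtype _) ⊆ S.finsupp (fun _ => range (N + 1)) := by
    intro h hh
    obtain ⟨h, hmem, rfl⟩ := mem_map.mp hh
    exact mem_finsupp_range_succ_iff.mpr ⟨le_sup (f := fun h => h.1.support) hmem, h.2⟩
  calc ∑ h ∈ u, (h.1.prod fun i e => ‖z i‖ ^ e)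
      = ∑ h ∈ u.map (Function.Embedding.subtype _), h.prod fun i e => ‖z i‖ ^ e := by
        rw [sum_map]; rfl
    _ ≤ ∑ h ∈ S.finsupp (fun _ => range (N + 1)), h.prod fun i e => ‖z i‖ ^ e :=
        sum_le_sum_of_subset_of_nonneg hu fun h _ _ => prod_nonneg fun i _ => by positivity
    _ = ∏ i ∈ S, ∑ e ∈ range (N + 1), ‖z i‖ ^ e := sum_finsupp_prod_pow _ _ _
    _ ≤ ∏ i ∈ S, (1 + ‖z i‖) ^ N :=
        prod_le_prod (fun i _ => by positivity)
          fun i _ => sum_range_pow_le_one_add_pow (norm_nonneg _) N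
    _ = (∏ i ∈ S, (1 + ‖z i‖)) ^ N := prod_pow _ _ _
    _ ≤ Real.exp (∑' i, ‖z i‖) ^ N := by
        gcongr
        exact (Real.prod_one_add_le_exp_sum S fun i => norm_nonneg _).trans
          (Real.exp_le_exp.mpr (hz.sum_le_tsum S fun i _ => norm_nonneg _))

theorem hasProd_sum_range_pow (hz : Summable (‖z ·‖)) (N : ℕ) :
    HasProd (fun i => ∑ e ∈ range (N + 1), z i ^ e)
      (∑' h : {h : ι →₀ ℕ // ∀ i, h i ≤ N}, h.1.prod fun i e => z i ^ e) := by
  classical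
  let D (s : Finset ι) := (s.finsupp fun _ => range (N + 1)).subtype fun h => ∀ i, h i ≤ N
  have hD : Tendsto D atTop atTop := by
    refine tendsto_atTop_finset_of_monotone (fun s t hst h hh => ?_) fun h => ⟨h.1.support, ?_⟩
    · obtain ⟨hs, hN⟩ := mem_finsupp_range_succ_iff.mp (mem_subtype.mp hh)
      exact mem_subtype.mpr (mem_finsupp_range_succ_iff.mpr ⟨hs.trans hst, hN⟩)
    · exact mem_subtype.mpr (mem_finsupp_range_succ_iff.mpr ⟨subset_rfl, h.2⟩)
  refine ((summable_finsupp_prod_pow hz N).hasSum.comp hD).congr fun s => ?_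
  rw [Function.comp_apply, ← sum_finsupp_prod_pow]
  exact sum_subtype_of_mem (fun h : ι →₀ ℕ => h.prod fun i e => z i ^ e)
    fun h hh => (mem_finsupp_range_succ_iff.mp hh).2

theorem hasSum_multiset_prod_map [DecidableEq ι] (hz : Summable (‖z ·‖)) (N : ℕ) :
    HasSum (fun M : {M : Multiset ι // ∀ i, M.count i ≤ N} => (M.1.map z).prod)
      (∏' i, ∑ e ∈ range (N + 1), z i ^ e) := by
  let e : {M : Multiset ι // ∀ i, M.count i ≤ N} ≃ {h : ι →₀ ℕ // ∀ i, h i ≤ N} :=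
    Multiset.toFinsupp.toEquiv.subtypeEquiv fun M => Iff.rfl
  have h := (hasProd_sum_range_pow hz N).tprod_eq ▸ (summable_finsupp_prod_pow hz N).hasSum
  rw [← e.hasSum_iff] at h
  convert h using 2 with M
  exact Finset.prod_multiset_map_count _ _

end BoundedMultiplicities

theorem qPochInf_neg (a r : ℂ) : qPochInf (-a) r = ∏' k, (1 + a * r ^ k) := by
  simp only [qPochInf, neg_mul, sub_neg_eq_add]

theorem multipliable_one_add_mul_pow (a : ℂ) {r : ℂ} (hr : ‖r‖ < 1) :
    Multipliable fun k => 1 + a * r ^ k :=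
  Complex.multipliable_one_add_of_summable ((summable_geometric_of_norm_lt_one hr).mul_left a)

theorem sum_range_four_pow {R : Type*} [CommSemiring R] (y : R) :
    ∑ e ∈ range 4, y ^ e = (1 + y) * (1 + y ^ 2) := by
  simp only [sum_range_succ, sum_range_zero]
  ring

noncomputable def oddPartWeight (x q : ℂ) (p : ℕ) : ℂ := if Odd p then x * q ^ p else 0

section OddParts

variable {q x : ℂ}

theorem norm_oddPartWeight_le (hx : ‖x‖ ≤ 1) (p : ℕ) : ‖oddPartWeight x q p‖ ≤ ‖q‖ ^ p := by
  unfold oddPartWeight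
  split_ifs
  · rw [norm_mul, norm_pow]
    exact mul_le_of_le_one_left (by positivity) hx
  · rw [norm_zero]
    positivity

theorem tprod_sum_range_four_pow_oddPartWeight (hq : ‖q‖ < 1) :
    ∏' p, ∑ e ∈ range 4, oddPartWeight x q p ^ e =
      qPochInf (-(x * q)) (q ^ 2) * qPochInf (-(x ^ 2 * q ^ 2)) (q ^ 4) := by
  have hsupp : Function.mulSupport (fun p => ∑ e ∈ range 4, oddPartWeight x q p ^ e) ⊆
      Set.range (fun k => 2 * k + 1) := by
    intro p hp
    by_cases hodd : Odd p
    · obtain ⟨k, rfl⟩ := hodd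
      exact ⟨k, rfl⟩
    · simp [oddPartWeight, hodd, sum_range_succ] at hp
  have hinj : Function.Injective fun k : ℕ => 2 * k + 1 := fun a b h => by simp only at h; omega
  have hpow {n : ℕ} (hn : n ≠ 0) : ‖q ^ n‖ < 1 := by
    rw [norm_pow]
    exact pow_lt_one₀ (norm_nonneg q) hq hn
  rw [qPochInf_neg, qPochInf_neg, ← (multipliable_one_add_mul_pow _ (hpow two_ne_zero)).tprod_mul
    (multipliable_one_add_mul_pow _ (hpow four_ne_zero)), ← hinj.tprod_eq hsupp]
  refine tprod_congr fun k => ?_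
  rw [oddPartWeight, if_pos (odd_two_mul_add_one k), sum_range_four_pow]
  ring

def B2set : Set (Multiset ℕ) := {M | (∀ p ∈ M, Odd p ∧ 0 < p) ∧ ∀ p, M.count p ≤ 3}

theorem prod_map_oddPartWeight {M : Multiset ℕ} (hM : ∀ p ∈ M, Odd p) :
    (M.map (oddPartWeight x q)).prod = x ^ Multiset.card M * q ^ M.sum := by
  induction M using Multiset.induction_on with
  | empty => simp
  | cons p M ih =>
    rw [Multiset.forall_mem_cons] at hM
    simp only [Multiset.map_cons, Multiset.prod_cons, ih hM.2, oddPartWeight, if_pos hM.1,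
      Multiset.card_cons, Multiset.sum_cons]
    ring

theorem indicator_prod_map_oddPartWeight :
    {M : Multiset ℕ | ∀ p, M.count p ≤ 3}.indicator (fun M => (M.map (oddPartWeight x q)).prod) =
      B2set.indicator fun M => x ^ Multiset.card M * q ^ M.sum := by
  ext M
  by_cases hodd : ∀ p ∈ M, Odd p
  · have hmem : M ∈ B2set ↔ M ∈ {M : Multiset ℕ | ∀ p, M.count p ≤ 3} :=
      and_iff_right fun p hp => ⟨hodd p hp, (hodd p hp).pos⟩
    by_cases hM : M ∈ {M : Multiset ℕ | ∀ p, M.count p ≤ 3}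
    · rw [Set.indicator_of_mem hM, Set.indicator_of_mem (hmem.mpr hM), prod_map_oddPartWeight hodd]
    · rw [Set.indicator_of_notMem hM, Set.indicator_of_notMem (mt hmem.mp hM)]
  · obtain ⟨p, hp, hpodd⟩ : ∃ p ∈ M, ¬Odd p := by simpa using hodd
    have hzero : (M.map (oddPartWeight x q)).prod = 0 :=
      Multiset.prod_eq_zero (Multiset.mem_map.mpr ⟨p, hp, if_neg hpodd⟩)
    have hnot : M ∉ B2set := fun hM => hpodd (hM.1 p hp).1
    simp [Set.indicator, hzero, hnot]

theorem hasSum_B2set (hq : ‖q‖ < 1) (hx : ‖x‖ ≤ 1) :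
    HasSum (fun M : B2set => x ^ Multiset.card M.1 * q ^ M.1.sum)
      (qPochInf (-(x * q)) (q ^ 2) * qPochInf (-(x ^ 2 * q ^ 2)) (q ^ 4)) := by
  have hz : Summable (‖oddPartWeight x q ·‖) :=
    (summable_geometric_of_lt_one (norm_nonneg q) hq).of_nonneg_of_le (fun _ => norm_nonneg _)
      (norm_oddPartWeight_le hx)
  have h := hasSum_multiset_prod_map hz 3
  rw [tprod_sum_range_four_pow_oddPartWeight hq] at h
  have h' : HasSum ({M : Multiset ℕ | ∀ p, M.count p ≤ 3}.indicator
      fun M => (M.map (oddPartWeight x q)).prod) _ := hasSum_subtype_iff_indicator.mp h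
  rw [indicator_prod_map_oddPartWeight] at h'
  exact hasSum_subtype_iff_indicator.mpr h'

theorem card_fiber_B2set (m n : ℕ) :
    Nat.card ((fun M : B2set => (Multiset.card M.1, M.1.sum)) ⁻¹' {(m, n)}) = B2count n m := by
  rw [Nat.card_coe_set_eq, ← Set.ncard_image_of_injective _ Subtype.val_injective, B2count]
  congr 1
  ext M
  simp only [B2set, Set.mem_ofPred_eq, Set.mem_image, Set.mem_preimage, Set.mem_singleton_iff,
    Prod.ext_iff, Subtype.exists, exists_and_left, exists_prop, exists_eq_right_right]
  tauto

theorem hasSum_B2count_of_hasSum_B2set {a : ℂ}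
    (h : HasSum (fun M : B2set => x ^ Multiset.card M.1 * q ^ M.1.sum) a) :
    HasSum (fun p : ℕ × ℕ => (B2count p.2 p.1 : ℂ) * x ^ p.1 * q ^ p.2) a := by
  refine (h.tsum_fiberwise fun M : B2set => (Multiset.card M.1, M.1.sum)).congr_fun ?_
  rintro ⟨m, n⟩
  calc (B2count n m : ℂ) * x ^ m * q ^ n
      = ∑' _ : (fun M : B2set => (Multiset.card M.1, M.1.sum)) ⁻¹' {(m, n)}, x ^ m * q ^ n := by
        rw [tsum_const, card_fiber_B2set, nsmul_eq_mul, mul_assoc]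
    _ = _ := tsum_congr fun M => by
        obtain ⟨hm, hn⟩ : Multiset.card M.1.1 = m ∧ M.1.1.sum = n := Prod.ext_iff.mp M.2
        rw [hm, hn]

end OddParts

/-- The generating function for `B₂`:
`Σ_{m,n≥0} B₂(n,m) x^m q^n = (−xq;q²)_∞ (−x²q²;q⁴)_∞`. -/
theorem B2_genfun (q x : ℂ) (hq : ‖q‖ < 1) (hx : ‖x‖ ≤ 1) :
    Summable (fun p : ℕ × ℕ => (B2count p.2 p.1 : ℂ) * x ^ p.1 * q ^ p.2) ∧
    ∑' p : ℕ × ℕ, (B2count p.2 p.1 : ℂ) * x ^ p.1 * q ^ p.2 =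
      qPochInf (-(x * q)) (q ^ 2) * qPochInf (-(x ^ 2 * q ^ 2)) (q ^ 4) := by
  have h := hasSum_B2count_of_hasSum_B2set (hasSum_B2set hq hx)
  exact ⟨h.summable, h.tsum_eq⟩
end
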